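/- Suppose additionally a discrete group H acts continuously on P preserving μ, with no nonempty compact H-invariant subsets. For each compact F ⊆ P let N_F = {η ∈ Γ : η(x) = 0 for all x ∈ F}. Then F ↦ N_F is a bijection from the set of compact subsets of P onto the set of nonzero order ideals of (Γ, Γ₊). -/

import Mathlib

open Set MeasureTheory

/-- Membership in the group `Γ`: `η : P → ℝ` is locally constant (continuous into the
discrete group `Δ`), takes values in `Δ`, and differs from some constant `r ∈ Δ` by a
compactly supported function of integral zero. -/
def MemGamma {P : Type*} [TopologicalSpace P] [MeasurableSpace P]
    (μ : Measure P) (Δ : AddSubgroup ℝ) (η : P → ℝ) : Prop :=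
  IsLocallyConstant η ∧ (∀ x, η x ∈ Δ) ∧
    ∃ r ∈ Δ, HasCompactSupport (fun x => η x - r) ∧ (∫ x, (η x - r) ∂μ) = 0

/-- `N` is an order ideal of `(Γ, Γ₊)`: a subgroup of `Γ` generated by its positive
part, which is hereditary: `η ∈ N` and `0 ≤ ν ≤ η` (with `ν ∈ Γ`) imply `ν ∈ N`. -/
def IsOrderIdealGamma {P : Type*} [TopologicalSpace P] [MeasurableSpace P]
    (μ : Measure P) (Δ : AddSubgroup ℝ) (N : Set (P → ℝ)) : Prop :=
  (∀ η ∈ N, MemGamma μ Δ η) ∧ (0 : P → ℝ) ∈ N ∧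
  (∀ η₁ ∈ N, ∀ η₂ ∈ N, η₁ - η₂ ∈ N) ∧
  (∀ η ∈ N, ∃ η₁ ∈ N, ∃ η₂ ∈ N,
    (∀ x, 0 ≤ η₁ x) ∧ (∀ x, 0 ≤ η₂ x) ∧ η = η₁ - η₂) ∧
  (∀ η ∈ N, ∀ ν : P → ℝ, MemGamma μ Δ ν → (∀ x, 0 ≤ ν x) → (∀ x, ν x ≤ η x) → ν ∈ N)

/-! Elements of `Γ` are locally constant, so weighted differences of indicators of compact open
sets separate points from compact sets; this makes every `N_F` nonzero and `F ↦ N_F` injective.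
Every element of `N_F` is dominated by a positive one: its positive part, corrected away from `F`
to restore integral zero (this is where the sets `L n` and the division hypothesis on `Δ` enter),
so `N_F` is an order ideal. Conversely, a nonzero order ideal `N` contains a positive element that
is a positive constant near infinity, so its common zero set `F` is compact; by compactness every
positive element of `N_F` is dominated by a finite combination of positive elements of `N`, so it
lies in `N`, and `N = N_F`. -/

theorem AddSubgroup.indicator_const_mem {α G : Type*} [AddGroup G] {Δ : AddSubgroup G}
    (S : Set α) {c : G} (hc : c ∈ Δ) (x : α) : S.indicator (fun _ => c) x ∈ Δ := by
  by_cases hx : x ∈ S <;> simp [hx, hc]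

theorem AddSubgroup.max_zero_mem {G : Type*} [AddGroup G] [LinearOrder G] {Δ : AddSubgroup G}
    {a : G} (ha : a ∈ Δ) : max a 0 ∈ Δ := by
  rcases le_total a 0 with h | h
  · rw [max_eq_right h]; exact Δ.zero_mem
  · rw [max_eq_left h]; exact ha

section Topology

variable {P : Type*} [TopologicalSpace P]

theorem exists_isCompact_isClopen_subset [T2Space P] [LocallyCompactSpace P]
    [TotallyDisconnectedSpace P] {x : P} {U : Set P} (hU : IsOpen U) (hx : x ∈ U) :
    ∃ K, IsCompact K ∧ IsClopen K ∧ x ∈ K ∧ K ⊆ U := by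
  obtain ⟨s, hs, hxs, hsU⟩ := exists_compact_subset hU hx
  obtain ⟨K, hK, hxK, hKs⟩ :=
    loc_compact_Haus_tot_disc_of_zero_dim.mem_nhds_iff.1 (isOpen_interior.mem_nhds hxs)
  exact ⟨K, hs.of_isClosed_subset hK.1 (hKs.trans interior_subset), hK, hxK,
    (hKs.trans interior_subset).trans hsU⟩

theorem IsCompact.exists_isCompact_isClopen_nonempty_disjoint [T2Space P] [LocallyCompactSpace P]
    [TotallyDisconnectedSpace P] [NoncompactSpace P] {F : Set P} (hF : IsCompact F) :
    ∃ K, IsCompact K ∧ IsClopen K ∧ K.Nonempty ∧ Disjoint K F := by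
  obtain ⟨x, hx⟩ := nonempty_compl.2 hF.ne_univ
  obtain ⟨K, hK, hKc, hxK, hKF⟩ := exists_isCompact_isClopen_subset hF.isClosed.isOpen_compl hx
  exact ⟨K, hK, hKc, ⟨x, hxK⟩, subset_compl_iff_disjoint_right.1 hKF⟩

theorem IsLocallyConstant.finite_range_of_hasCompactSupport {Y : Type*} [Zero Y] {g : P → Y}
    (hg : IsLocallyConstant g) (hs : HasCompactSupport g) : (range g).Finite := by
  let _ : TopologicalSpace Y := ⊥
  have : DiscreteTopology Y := discreteTopology_bot Y
  refine ((hs.image hg.continuous).finite_of_discrete.insert 0).subset ?_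
  rintro _ ⟨x, rfl⟩
  by_cases hx : x ∈ tsupport g
  · exact mem_insert_of_mem _ (mem_image_of_mem g hx)
  · exact mem_insert_iff.2 (Or.inl (image_eq_zero_of_notMem_tsupport hx))

theorem eq_of_notMem_tsupport_sub {η : P → ℝ} {r : ℝ} {x : P}
    (hx : x ∉ tsupport fun y => η y - r) : η x = r :=
  sub_eq_zero.1 (image_eq_zero_of_notMem_tsupport (f := fun y => η y - r) hx)

theorem const_nonneg_of_hasCompactSupport_sub [NoncompactSpace P] {η : P → ℝ} {r : ℝ}
    (hη : 0 ≤ η) (hs : HasCompactSupport fun x => η x - r) : 0 ≤ r := by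
  obtain ⟨x, hx⟩ := nonempty_compl.2 (IsCompact.ne_univ hs)
  exact eq_of_notMem_tsupport_sub hx ▸ hη x

theorem isLocallyConstant_indicator_const {S : Set P} (hS : IsClopen S) (c : ℝ) :
    IsLocallyConstant (S.indicator fun _ => c) :=
  ((LocallyConstant.const P c).indicator hS).isLocallyConstant

theorem IsCompact.hasCompactSupport_indicator_const [T2Space P] {K : Set P} (hK : IsCompact K)
    (c : ℝ) : HasCompactSupport (K.indicator fun _ => c) :=
  HasCompactSupport.intro hK fun _ hx => indicator_of_notMem hx _

end Topology

section Gamma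

variable {P : Type*} [TopologicalSpace P] [MeasurableSpace P] {μ : Measure P}
  {Δ : AddSubgroup ℝ}

theorem measureReal_mem_of_isCompact_isOpen (hΔone : (1 : ℝ) ∈ Δ)
    (hΔmul : ∀ r ∈ Δ, ∀ K : Set P, IsCompact K → IsOpen K → (μ K).toReal * r ∈ Δ)
    {K : Set P} (hK : IsCompact K) (hKo : IsOpen K) : μ.real K ∈ Δ := by
  simpa [measureReal_def] using hΔmul 1 hΔone K hK hKo

theorem IsLocallyConstant.integrable [OpensMeasurableSpace P] [IsFiniteMeasureOnCompacts μ]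
    {g : P → ℝ} (hg : IsLocallyConstant g) (hs : HasCompactSupport g) : Integrable g μ :=
  hg.continuous.integrable_of_hasCompactSupport hs

theorem integral_mem_of_isLocallyConstant [OpensMeasurableSpace P] [IsFiniteMeasureOnCompacts μ]
    (hΔmul : ∀ r ∈ Δ, ∀ K : Set P, IsCompact K → IsOpen K → (μ K).toReal * r ∈ Δ)
    {g : P → ℝ} (hg : IsLocallyConstant g) (hs : HasCompactSupport g) (hval : ∀ x, g x ∈ Δ) :
    ∫ x, g x ∂μ ∈ Δ := by
  let f : SimpleFunc P ℝ := ⟨g, fun v => (hg.isClosed_fiber v).measurableSet,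
    hg.finite_range_of_hasCompactSupport hs⟩
  rw [show ∫ x, g x ∂μ = ∫ x, f x ∂μ from rfl,
    f.integral_eq_sum (hg.integrable hs)]
  refine Δ.sum_mem fun v hv => ?_
  obtain ⟨x, rfl⟩ := f.mem_range.1 hv
  show μ.real (g ⁻¹' {g x}) • g x ∈ Δ
  by_cases hx : g x = 0
  · simp [hx]
  -- a nonzero fiber is open and closed inside the compact support
  have hfiber : IsCompact (g ⁻¹' {g x}) := hs.of_isClosed_subset (hg.isClosed_fiber _)
    fun y hy => subset_tsupport g (by simp_all [mem_preimage])
  rw [smul_eq_mul, measureReal_def]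
  exact hΔmul _ (hval x) _ hfiber (hg.isOpen_fiber _)

theorem memGamma_zero : MemGamma μ Δ 0 :=
  ⟨IsLocallyConstant.const 0, fun _ => Δ.zero_mem, 0, Δ.zero_mem,
    by simp only [Pi.zero_apply, sub_zero]; exact HasCompactSupport.zero, by simp⟩

theorem MemGamma.sub [OpensMeasurableSpace P] [IsFiniteMeasureOnCompacts μ]
    {η₁ η₂ : P → ℝ} (h₁ : MemGamma μ Δ η₁) (h₂ : MemGamma μ Δ η₂) :
    MemGamma μ Δ (η₁ - η₂) := by
  obtain ⟨hlc₁, hval₁, r₁, hr₁, hs₁, hi₁⟩ := h₁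
  obtain ⟨hlc₂, hval₂, r₂, hr₂, hs₂, hi₂⟩ := h₂
  have hshift : (fun x => (η₁ - η₂) x - (r₁ - r₂)) =
      fun x => (η₁ x - r₁) - (η₂ x - r₂) := by
    ext x; simp only [Pi.sub_apply]; ring
  refine ⟨hlc₁.sub hlc₂, fun x => Δ.sub_mem (hval₁ x) (hval₂ x), r₁ - r₂, Δ.sub_mem hr₁ hr₂,
    ?_, ?_⟩
  · rw [hshift]
    exact hs₁.sub hs₂
  · have hlc₁' : IsLocallyConstant fun x => η₁ x - r₁ := hlc₁.comp (· - r₁)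
    have hlc₂' : IsLocallyConstant fun x => η₂ x - r₂ := hlc₂.comp (· - r₂)
    rw [hshift, integral_sub (hlc₁'.integrable hs₁) (hlc₂'.integrable hs₂), hi₁, hi₂, sub_zero]

theorem IsCompact.measureReal_pos [IsFiniteMeasureOnCompacts μ] [μ.IsOpenPosMeasure] {K : Set P}
    (hK : IsCompact K) (hKo : IsOpen K) (hne : K.Nonempty) : 0 < μ.real K :=
  ENNReal.toReal_pos (hKo.measure_pos μ hne).ne' hK.measure_lt_top.ne

theorem IsCompact.integrable_indicator_const [T2Space P] [OpensMeasurableSpace P]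
    [IsFiniteMeasureOnCompacts μ] {K : Set P} (hK : IsCompact K) (c : ℝ) :
    Integrable (K.indicator fun _ => c) μ :=
  (integrable_indicator_iff hK.measurableSet).2 (integrableOn_const hK.measure_lt_top.ne)

theorem MemGamma.exists_pos_const_of_nonneg [NoncompactSpace P] [OpensMeasurableSpace P]
    [IsFiniteMeasureOnCompacts μ] [μ.IsOpenPosMeasure] {η : P → ℝ} (hη : MemGamma μ Δ η)
    (hpos : 0 ≤ η) (hne : η ≠ 0) : ∃ r, 0 < r ∧ HasCompactSupport fun x => η x - r := by
  obtain ⟨hlc, -, r, -, hs, hi⟩ := hη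
  refine ⟨r, (const_nonneg_of_hasCompactSupport_sub hpos hs).lt_of_ne' fun hr => ?_, hs⟩
  subst hr
  obtain ⟨x, hx⟩ := Function.ne_iff.1 hne
  simp only [sub_zero] at hs hi
  exact (hlc.continuous.integral_pos_of_hasCompactSupport_nonneg_nonzero hs hpos hx).ne' hi

def gammaVanishingOn (μ : Measure P) (Δ : AddSubgroup ℝ) (F : Set P) : Set (P → ℝ) :=
  {η | MemGamma μ Δ η ∧ ∀ x ∈ F, η x = 0}

theorem sub_mem_gammaVanishingOn [OpensMeasurableSpace P] [IsFiniteMeasureOnCompacts μ]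
    {F : Set P} {η₁ η₂ : P → ℝ} (h₁ : η₁ ∈ gammaVanishingOn μ Δ F)
    (h₂ : η₂ ∈ gammaVanishingOn μ Δ F) : η₁ - η₂ ∈ gammaVanishingOn μ Δ F :=
  ⟨h₁.1.sub h₂.1, fun x hx => by simp [h₁.2 x hx, h₂.2 x hx]⟩

theorem exists_pos_mem_gammaVanishingOn [T2Space P] [LocallyCompactSpace P]
    [TotallyDisconnectedSpace P] [NoncompactSpace P] [OpensMeasurableSpace P]
    [IsFiniteMeasureOnCompacts μ] [μ.IsOpenPosMeasure] (hΔone : (1 : ℝ) ∈ Δ)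
    (hΔmul : ∀ r ∈ Δ, ∀ K : Set P, IsCompact K → IsOpen K → (μ K).toReal * r ∈ Δ)
    {F : Set P} (hF : IsCompact F) {x₀ : P} (hx₀ : x₀ ∉ F) :
    ∃ η ∈ gammaVanishingOn μ Δ F, 0 < η x₀ := by
  obtain ⟨K, hK, hKc, hx₀K, hKF⟩ := exists_isCompact_isClopen_subset hF.isClosed.isOpen_compl hx₀
  obtain ⟨K', hK', hK'c, hK'ne, hK'disj⟩ :=
    (hF.union hK).exists_isCompact_isClopen_nonempty_disjoint
  have hx₀K' : x₀ ∉ K' := fun h => hK'disj.notMem_of_mem_left h (Or.inr hx₀K)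
  -- the weights are chosen so that the integral vanishes
  let η := fun x => K.indicator (fun _ => μ.real K') x - K'.indicator (fun _ => μ.real K) x
  have hηlc : IsLocallyConstant η :=
    (isLocallyConstant_indicator_const hKc _).comp₂ (isLocallyConstant_indicator_const hK'c _) _
  refine ⟨η, ⟨⟨hηlc, fun x => Δ.sub_mem ?_ ?_, 0, Δ.zero_mem, ?_, ?_⟩, fun x hx => ?_⟩, ?_⟩
  · exact AddSubgroup.indicator_const_mem K (measureReal_mem_of_isCompact_isOpen hΔone hΔmul hK'
      hK'c.isOpen) x
  · exact AddSubgroup.indicator_const_mem K' (measureReal_mem_of_isCompact_isOpen hΔone hΔmul hK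
      hKc.isOpen) x
  · simp only [sub_zero]
    exact (hK.hasCompactSupport_indicator_const _).sub (hK'.hasCompactSupport_indicator_const _)
  · simp only [sub_zero, η]
    rw [integral_sub (hK.integrable_indicator_const _) (hK'.integrable_indicator_const _),
      integral_indicator_const _ hK.measurableSet, integral_indicator_const _ hK'.measurableSet,
      smul_eq_mul, smul_eq_mul, mul_comm, sub_self]
  · have hxK' : x ∉ K' := fun h => hK'disj.notMem_of_mem_left h (Or.inl hx)
    simp [η, indicator_of_notMem (hKF · hx), indicator_of_notMem hxK']
  · simpa [η, hx₀K, hx₀K'] using hK'.measureReal_pos hK'c.isOpen hK'ne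

theorem exists_nonneg_vanishing_integral_sub_const_eq [T2Space P] [LocallyCompactSpace P]
    [TotallyDisconnectedSpace P] [NoncompactSpace P] [OpensMeasurableSpace P]
    [IsFiniteMeasureOnCompacts μ] [μ.IsOpenPosMeasure] {L : ℕ → Set P} (hLmono : Monotone L)
    (hL : ∀ n, IsCompact (L n) ∧ IsOpen (L n) ∧ (L n).Nonempty) (hLunion : (⋃ n, L n) = univ)
    (hΔone : (1 : ℝ) ∈ Δ)
    (hΔmul : ∀ r ∈ Δ, ∀ K : Set P, IsCompact K → IsOpen K → (μ K).toReal * r ∈ Δ)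
    (hΔdiv : ∀ r ∈ Δ, ∀ n : ℕ, ((μ (L n)).toReal)⁻¹ * r ∈ Δ)
    {F : Set P} (hF : IsCompact F) {a : ℝ} (ha : a ∈ Δ) :
    ∃ φ : P → ℝ, ∃ c ∈ Δ, IsLocallyConstant φ ∧ (∀ x, φ x ∈ Δ) ∧ 0 ≤ φ ∧ (∀ x ∈ F, φ x = 0) ∧
      HasCompactSupport (fun x => φ x - c) ∧ ∫ x, (φ x - c) ∂μ = a := by
  obtain ⟨K, hK, hKc, hKne, hKF⟩ := hF.exists_isCompact_isClopen_nonempty_disjoint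
  obtain ⟨n, hn⟩ := hF.elim_directed_cover L (fun n => (hL n).2.1)
    (by rw [hLunion]; exact subset_univ _) hLmono.directed_le
  obtain ⟨hLn, hLno, hLne⟩ := hL n
  have hLc : IsClopen (L n) := ⟨hLn.isClosed, hLno⟩
  have hKpos : 0 < μ.real K := hK.measureReal_pos hKc.isOpen hKne
  obtain ⟨k, hk⟩ := exists_nat_ge (a / μ.real K)
  rw [div_le_iff₀ hKpos] at hk
  -- `φ - c` is `k` on `K` minus `c` on `L n`, with integral `μ K * k - c * μ (L n) = a`;
  -- `k` is taken large so that `c ≥ 0`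
  set c := (μ.real (L n))⁻¹ * (μ.real K * k - a)
  have hk₁ : (k : ℝ) ∈ Δ := by simpa using Δ.nsmul_mem hΔone k
  have hc : c ∈ Δ := hΔdiv _ (Δ.sub_mem (hΔmul _ hk₁ K hK hKc.isOpen) ha) n
  have hc₀ : 0 ≤ c := mul_nonneg (inv_nonneg.2 measureReal_nonneg) (by linarith)
  let φ := fun x => K.indicator (fun _ => (k : ℝ)) x + (L n)ᶜ.indicator (fun _ => c) x
  have hφc : (fun x => φ x - c) =
      fun x => K.indicator (fun _ => (k : ℝ)) x - (L n).indicator (fun _ => c) x := by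
    ext x
    by_cases hx : x ∈ L n <;> simp [φ, hx]
  refine ⟨φ, c, hc, (isLocallyConstant_indicator_const hKc _).add
      (isLocallyConstant_indicator_const hLc.compl _),
    fun x => Δ.add_mem (AddSubgroup.indicator_const_mem K hk₁ x)
      (AddSubgroup.indicator_const_mem _ hc x),
    fun x => add_nonneg (indicator_nonneg (fun _ _ => k.cast_nonneg) x)
      (indicator_nonneg (fun _ _ => hc₀) x),
    fun x hx => ?_, ?_, ?_⟩
  · simp [φ, hKF.notMem_of_mem_right hx, hn hx]
  · rw [hφc]
    exact (hK.hasCompactSupport_indicator_const _).sub (hLn.hasCompactSupport_indicator_const _)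
  · rw [hφc, integral_sub (hK.integrable_indicator_const _) (hLn.integrable_indicator_const _),
      integral_indicator_const _ hK.measurableSet, integral_indicator_const _ hLn.measurableSet,
      smul_eq_mul, smul_eq_mul, mul_comm, ← mul_assoc, mul_inv_cancel₀
        (hLn.measureReal_pos (μ := μ) hLno hLne).ne']
    ring

theorem exists_nonneg_ge_mem_gammaVanishingOn [T2Space P] [LocallyCompactSpace P]
    [TotallyDisconnectedSpace P] [NoncompactSpace P] [OpensMeasurableSpace P]
    [IsFiniteMeasureOnCompacts μ] [μ.IsOpenPosMeasure] {L : ℕ → Set P} (hLmono : Monotone L)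
    (hL : ∀ n, IsCompact (L n) ∧ IsOpen (L n) ∧ (L n).Nonempty) (hLunion : (⋃ n, L n) = univ)
    (hΔone : (1 : ℝ) ∈ Δ)
    (hΔmul : ∀ r ∈ Δ, ∀ K : Set P, IsCompact K → IsOpen K → (μ K).toReal * r ∈ Δ)
    (hΔdiv : ∀ r ∈ Δ, ∀ n : ℕ, ((μ (L n)).toReal)⁻¹ * r ∈ Δ)
    {F : Set P} (hF : IsCompact F) {ν : P → ℝ} (hν : ν ∈ gammaVanishingOn μ Δ F) :
    ∃ ν₁ ∈ gammaVanishingOn μ Δ F, 0 ≤ ν₁ ∧ ν ≤ ν₁ := by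
  obtain ⟨⟨hlc, hval, r, hr, hs, -⟩, hνF⟩ := hν
  -- the positive part of `ν`, corrected by some `φ` to bring the integral back to zero
  let g := fun x => max (ν x) 0 - max r 0
  have hglc : IsLocallyConstant g := hlc.comp fun t => max t 0 - max r 0
  have hgs : HasCompactSupport g := HasCompactSupport.intro hs fun x hx => by
    simp [g, eq_of_notMem_tsupport_sub hx]
  obtain ⟨φ, c, hc, hφlc, hφval, hφpos, hφF, hφs, hφi⟩ :=
    exists_nonneg_vanishing_integral_sub_const_eq hLmono hL hLunion hΔone hΔmul hΔdiv hF
      (Δ.neg_mem (integral_mem_of_isLocallyConstant (μ := μ) hΔmul hglc hgs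
        fun x => Δ.sub_mem (AddSubgroup.max_zero_mem (hval x)) (AddSubgroup.max_zero_mem hr)))
  have hshift : (fun x => max (ν x) 0 + φ x - (max r 0 + c)) = fun x => g x + (φ x - c) := by
    ext x; ring
  refine ⟨fun x => max (ν x) 0 + φ x, ⟨⟨(hlc.comp fun t => max t 0).add hφlc,
    fun x => Δ.add_mem (AddSubgroup.max_zero_mem (hval x)) (hφval x),
    max r 0 + c, Δ.add_mem (AddSubgroup.max_zero_mem hr) hc, ?_, ?_⟩, fun x hx => ?_⟩,
    fun x => add_nonneg (le_max_right _ _) (hφpos x),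
    fun x => (le_max_left _ _).trans (le_add_of_nonneg_right (hφpos x))⟩
  · rw [hshift]
    exact hgs.add hφs
  · have hφclc : IsLocallyConstant fun x => φ x - c := hφlc.comp (· - c)
    rw [hshift, integral_add (hglc.integrable hgs) (hφclc.integrable hφs), hφi, add_neg_cancel]
  · simp [hνF x hx, hφF x hx]

theorem isOrderIdealGamma_gammaVanishingOn [T2Space P] [LocallyCompactSpace P]
    [TotallyDisconnectedSpace P] [NoncompactSpace P] [OpensMeasurableSpace P]
    [IsFiniteMeasureOnCompacts μ] [μ.IsOpenPosMeasure] {L : ℕ → Set P} (hLmono : Monotone L)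
    (hL : ∀ n, IsCompact (L n) ∧ IsOpen (L n) ∧ (L n).Nonempty) (hLunion : (⋃ n, L n) = univ)
    (hΔone : (1 : ℝ) ∈ Δ)
    (hΔmul : ∀ r ∈ Δ, ∀ K : Set P, IsCompact K → IsOpen K → (μ K).toReal * r ∈ Δ)
    (hΔdiv : ∀ r ∈ Δ, ∀ n : ℕ, ((μ (L n)).toReal)⁻¹ * r ∈ Δ)
    {F : Set P} (hF : IsCompact F) : IsOrderIdealGamma μ Δ (gammaVanishingOn μ Δ F) := by
  refine ⟨fun η hη => hη.1, ⟨memGamma_zero, fun _ _ => rfl⟩,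
    fun η₁ h₁ η₂ h₂ => sub_mem_gammaVanishingOn h₁ h₂, fun ν hν => ?_, ?_⟩
  · obtain ⟨ν₁, hν₁, hpos, hle⟩ :=
      exists_nonneg_ge_mem_gammaVanishingOn hLmono hL hLunion hΔone hΔmul hΔdiv hF hν
    exact ⟨ν₁, hν₁, ν₁ - ν, sub_mem_gammaVanishingOn hν₁ hν, hpos, fun x => sub_nonneg.2 (hle x),
      (sub_sub_cancel ν₁ ν).symm⟩
  · rintro η ⟨-, hηF⟩ ν hν hpos hle
    exact ⟨hν, fun x hx => le_antisymm (hηF x hx ▸ hle x) (hpos x)⟩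

theorem subset_of_gammaVanishingOn_subset [T2Space P] [LocallyCompactSpace P]
    [TotallyDisconnectedSpace P] [NoncompactSpace P] [OpensMeasurableSpace P]
    [IsFiniteMeasureOnCompacts μ] [μ.IsOpenPosMeasure] (hΔone : (1 : ℝ) ∈ Δ)
    (hΔmul : ∀ r ∈ Δ, ∀ K : Set P, IsCompact K → IsOpen K → (μ K).toReal * r ∈ Δ)
    {F₁ F₂ : Set P} (hF₂ : IsCompact F₂)
    (h : gammaVanishingOn μ Δ F₂ ⊆ gammaVanishingOn μ Δ F₁) : F₁ ⊆ F₂ := by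
  intro x hx
  by_contra hx₂
  obtain ⟨η, hη, hpos⟩ := exists_pos_mem_gammaVanishingOn hΔone hΔmul hF₂ hx₂
  exact hpos.ne' ((h hη).2 x hx)

def commonZeros (N : Set (P → ℝ)) : Set P :=
  {x | ∀ η ∈ N, η x = 0}

namespace IsOrderIdealGamma

variable {N : Set (P → ℝ)}

def toAddSubgroup (hN : IsOrderIdealGamma μ Δ N) : AddSubgroup (P → ℝ) :=
  AddSubgroup.ofSub N ⟨0, hN.2.1⟩ fun a ha b hb => sub_eq_add_neg a b ▸ hN.2.2.1 a ha b hb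

theorem add_mem (hN : IsOrderIdealGamma μ Δ N) {a b : P → ℝ} (ha : a ∈ N) (hb : b ∈ N) :
    a + b ∈ N :=
  hN.toAddSubgroup.add_mem ha hb

theorem nsmul_mem (hN : IsOrderIdealGamma μ Δ N) {a : P → ℝ} (ha : a ∈ N) (m : ℕ) :
    m • a ∈ N :=
  hN.toAddSubgroup.nsmul_mem ha m

theorem exists_nonneg_pos_at (hN : IsOrderIdealGamma μ Δ N) {η : P → ℝ} (hη : η ∈ N) {x : P}
    (hx : η x ≠ 0) : ∃ ζ ∈ N, 0 ≤ ζ ∧ 0 < ζ x := by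
  obtain ⟨η₁, h₁, η₂, h₂, h₁pos, h₂pos, rfl⟩ := hN.2.2.2.1 η hη
  rcases (h₁pos x).lt_or_eq with h | h
  · exact ⟨η₁, h₁, h₁pos, h⟩
  · refine ⟨η₂, h₂, h₂pos, (h₂pos x).lt_of_ne fun h' => hx ?_⟩
    simp [← h, ← h']

theorem exists_nonneg_ge_on (hN : IsOrderIdealGamma μ Δ N) {E : Set P} (hE : IsCompact E)
    (hEN : ∀ x ∈ E, ∃ η ∈ N, η x ≠ 0) (M : ℝ) : ∃ ζ ∈ N, 0 ≤ ζ ∧ ∀ x ∈ E, M ≤ ζ x := by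
  revert M
  refine hE.induction_on (p := fun s => ∀ M, ∃ ζ ∈ N, 0 ≤ ζ ∧ ∀ x ∈ s, M ≤ ζ x)
    (fun _ => ⟨0, hN.2.1, le_rfl, by simp⟩) ?_ ?_ ?_
  · intro s t hst ht M
    obtain ⟨ζ, hζ, hpos, hM⟩ := ht M
    exact ⟨ζ, hζ, hpos, fun x hx => hM x (hst hx)⟩
  · intro s t hs ht M
    obtain ⟨ζ₁, h₁, h₁pos, h₁M⟩ := hs M
    obtain ⟨ζ₂, h₂, h₂pos, h₂M⟩ := ht M
    refine ⟨ζ₁ + ζ₂, hN.add_mem h₁ h₂, add_nonneg h₁pos h₂pos, ?_⟩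
    rintro x (hx | hx)
    · exact le_add_of_le_of_nonneg (h₁M x hx) (h₂pos x)
    · exact le_add_of_nonneg_of_le (h₁pos x) (h₂M x hx)
  · intro x hx
    obtain ⟨η, hη, hηx⟩ := hEN x hx
    obtain ⟨ζ, hζ, hpos, hζx⟩ := hN.exists_nonneg_pos_at hη hηx
    -- near `x`, the locally constant `ζ` keeps its positive value `ζ x`, so a multiple exceeds `M`
    refine ⟨{y | ζ y = ζ x},
      mem_nhdsWithin_of_mem_nhds (((hN.1 ζ hζ).1.isOpen_fiber _).mem_nhds rfl), fun M => ?_⟩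
    obtain ⟨m, hm⟩ := exists_nat_ge (M / ζ x)
    refine ⟨m • ζ, hN.nsmul_mem hζ m, nsmul_nonneg hpos m, fun y hy => ?_⟩
    rw [Pi.smul_apply, show ζ y = ζ x from hy, nsmul_eq_mul]
    exact (div_le_iff₀ hζx).1 hm

theorem exists_nonneg_pos_const [NoncompactSpace P] [OpensMeasurableSpace P]
    [IsFiniteMeasureOnCompacts μ] [μ.IsOpenPosMeasure] (hN : IsOrderIdealGamma μ Δ N)
    (hne : ∃ η ∈ N, η ≠ 0) :
    ∃ η₀ ∈ N, 0 ≤ η₀ ∧ ∃ r₀, 0 < r₀ ∧ HasCompactSupport fun x => η₀ x - r₀ := by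
  obtain ⟨η, hη, hne⟩ := hne
  obtain ⟨x, hx⟩ := Function.ne_iff.1 hne
  obtain ⟨ζ, hζ, hpos, hζx⟩ := hN.exists_nonneg_pos_at hη hx
  exact ⟨ζ, hζ, hpos,
    (hN.1 ζ hζ).exists_pos_const_of_nonneg hpos fun h => hζx.ne' (congrFun h x)⟩

theorem isCompact_commonZeros [NoncompactSpace P] [OpensMeasurableSpace P]
    [IsFiniteMeasureOnCompacts μ] [μ.IsOpenPosMeasure] (hN : IsOrderIdealGamma μ Δ N)
    (hne : ∃ η ∈ N, η ≠ 0) : IsCompact (commonZeros N) := by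
  obtain ⟨η₀, hη₀, -, r₀, hr₀, hs₀⟩ := hN.exists_nonneg_pos_const hne
  have hclosed : IsClosed (commonZeros N) := by
    simp only [commonZeros, ofPred_forall]
    exact isClosed_biInter fun η hη => (hN.1 η hη).1.isClosed_fiber 0
  refine hs₀.of_isClosed_subset hclosed fun x hx => subset_tsupport _ ?_
  simp [hx η₀ hη₀, hr₀.ne']

theorem mem_of_nonneg_of_mem_gammaVanishingOn [NoncompactSpace P] [OpensMeasurableSpace P]
    [IsFiniteMeasureOnCompacts μ] [μ.IsOpenPosMeasure] (hN : IsOrderIdealGamma μ Δ N)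
    (hne : ∃ η ∈ N, η ≠ 0) {ν : P → ℝ} (hν : ν ∈ gammaVanishingOn μ Δ (commonZeros N))
    (hpos : 0 ≤ ν) : ν ∈ N := by
  obtain ⟨η₀, hη₀, hη₀pos, r₀, hr₀, hs₀⟩ := hN.exists_nonneg_pos_const hne
  obtain ⟨hlc, -, c, -, hs, -⟩ := hν.1
  obtain ⟨B, hB⟩ := (hlc.comp (· - c)).continuous.bddAbove_range_of_hasCompactSupport hs
  -- off `K`, `ν = c` and `η₀ = r₀`; on `K ∩ support ν` we dominate `ν` by elements of `N`
  set K := tsupport (fun x => ν x - c) ∪ tsupport fun x => η₀ x - r₀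
  have hE : IsCompact (K ∩ Function.support ν) :=
    (hs.union hs₀).inter_right (hlc.isOpen_fiber 0).isClosed_compl
  obtain ⟨ζ, hζ, hζpos, hζB⟩ := hN.exists_nonneg_ge_on hE
    (fun x hx => by simpa [commonZeros] using mt (hν.2 x) hx.2) (B + c)
  obtain ⟨m, hm⟩ := exists_nat_ge (c / r₀)
  refine hN.2.2.2.2 (m • η₀ + ζ) (hN.add_mem (hN.nsmul_mem hη₀ m) hζ) ν hν.1 hpos fun x => ?_
  have hm₀ : 0 ≤ (m • η₀) x := nsmul_nonneg (hη₀pos x) m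
  have hζx : 0 ≤ ζ x := hζpos x
  rw [Pi.add_apply]
  by_cases hx : x ∈ K ∩ Function.support ν
  · have hνB : ν x - c ≤ B := hB ⟨x, rfl⟩
    linarith [hζB x hx]
  by_cases hxK : x ∈ K
  · have hνx : ν x = 0 := by simpa using fun h => hx ⟨hxK, h⟩
    linarith
  · have hνx : ν x = c := eq_of_notMem_tsupport_sub fun h => hxK (Or.inl h)
    have hη₀x : η₀ x = r₀ := eq_of_notMem_tsupport_sub fun h => hxK (Or.inr h)
    rw [Pi.smul_apply, hη₀x, nsmul_eq_mul, hνx]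
    linarith [(div_le_iff₀ hr₀).1 hm]

theorem eq_gammaVanishingOn_commonZeros [T2Space P] [LocallyCompactSpace P]
    [TotallyDisconnectedSpace P] [NoncompactSpace P] [OpensMeasurableSpace P]
    [IsFiniteMeasureOnCompacts μ] [μ.IsOpenPosMeasure] {L : ℕ → Set P} (hLmono : Monotone L)
    (hL : ∀ n, IsCompact (L n) ∧ IsOpen (L n) ∧ (L n).Nonempty) (hLunion : (⋃ n, L n) = univ)
    (hΔone : (1 : ℝ) ∈ Δ)
    (hΔmul : ∀ r ∈ Δ, ∀ K : Set P, IsCompact K → IsOpen K → (μ K).toReal * r ∈ Δ)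
    (hΔdiv : ∀ r ∈ Δ, ∀ n : ℕ, ((μ (L n)).toReal)⁻¹ * r ∈ Δ)
    (hN : IsOrderIdealGamma μ Δ N) (hne : ∃ η ∈ N, η ≠ 0) :
    N = gammaVanishingOn μ Δ (commonZeros N) := by
  refine subset_antisymm (fun η hη => ⟨hN.1 η hη, fun x hx => hx η hη⟩) fun ν hν => ?_
  obtain ⟨ν₁, hν₁, hpos, hle⟩ := exists_nonneg_ge_mem_gammaVanishingOn hLmono hL hLunion hΔone
    hΔmul hΔdiv (hN.isCompact_commonZeros hne) hν
  have hν₂ := sub_mem_gammaVanishingOn hν₁ hν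
  simpa using hN.2.2.1 _ (hN.mem_of_nonneg_of_mem_gammaVanishingOn hne hν₁ hpos)
    _ (hN.mem_of_nonneg_of_mem_gammaVanishingOn hne hν₂ (sub_nonneg.2 hle))

end IsOrderIdealGamma

end Gamma

theorem gamma_order_ideals_bijection_general
    {P : Type*} [TopologicalSpace P] [T2Space P] [LocallyCompactSpace P]
    [TotallyDisconnectedSpace P] [NoncompactSpace P]
    [MeasurableSpace P] [BorelSpace P]
    (μ : Measure P)
    (hμpos : ∀ U : Set P, IsOpen U → U.Nonempty → 0 < μ U)
    (hμfin : ∀ K : Set P, IsCompact K → μ K ≠ ⊤)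
    (L : ℕ → Set P) (hLmono : Monotone L)
    (hL : ∀ n, IsCompact (L n) ∧ IsOpen (L n) ∧ (L n).Nonempty)
    (hLunion : (⋃ n, L n) = Set.univ)
    (Δ : AddSubgroup ℝ) (hΔone : (1 : ℝ) ∈ Δ)
    (hΔmul : ∀ r ∈ Δ, ∀ K : Set P, IsCompact K → IsOpen K → (μ K).toReal * r ∈ Δ)
    (hΔdiv : ∀ r ∈ Δ, ∀ n : ℕ, ((μ (L n)).toReal)⁻¹ * r ∈ Δ) :
    -- each `N_F` is a nonzero order ideal
    (∀ F : Set P, IsCompact F →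
      IsOrderIdealGamma μ Δ {η : P → ℝ | MemGamma μ Δ η ∧ ∀ x ∈ F, η x = 0} ∧
      ∃ η : P → ℝ, η ∈ {η : P → ℝ | MemGamma μ Δ η ∧ ∀ x ∈ F, η x = 0} ∧ η ≠ 0) ∧
    -- injectivity of `F ↦ N_F`
    (∀ F₁ F₂ : Set P, IsCompact F₁ → IsCompact F₂ →
      {η : P → ℝ | MemGamma μ Δ η ∧ ∀ x ∈ F₁, η x = 0} =
        {η : P → ℝ | MemGamma μ Δ η ∧ ∀ x ∈ F₂, η x = 0} → F₁ = F₂) ∧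
    -- surjectivity onto nonzero order ideals
    (∀ N : Set (P → ℝ), IsOrderIdealGamma μ Δ N → (∃ η ∈ N, η ≠ (0 : P → ℝ)) →
      ∃ F : Set P, IsCompact F ∧
        N = {η : P → ℝ | MemGamma μ Δ η ∧ ∀ x ∈ F, η x = 0}) := by
  have : IsFiniteMeasureOnCompacts μ := ⟨fun K hK => (hμfin K hK).lt_top⟩
  have : μ.IsOpenPosMeasure := ⟨fun U hU hne => (hμpos U hU hne).ne'⟩
  refine ⟨fun F hF => ⟨isOrderIdealGamma_gammaVanishingOn hLmono hL hLunion hΔone hΔmul hΔdiv hF,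
      ?_⟩, fun F₁ F₂ hF₁ hF₂ h => ?_, fun N hN hne => ⟨commonZeros N, hN.isCompact_commonZeros hne,
      hN.eq_gammaVanishingOn_commonZeros hLmono hL hLunion hΔone hΔmul hΔdiv hne⟩⟩
  · obtain ⟨x₀, hx₀⟩ := nonempty_compl.2 hF.ne_univ
    obtain ⟨η, hη, hpos⟩ := exists_pos_mem_gammaVanishingOn hΔone hΔmul hF hx₀
    exact ⟨η, hη, fun h => hpos.ne' (congrFun h x₀)⟩
  · exact (subset_of_gammaVanishingOn_subset hΔone hΔmul hF₂ h.ge).antisymm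
      (subset_of_gammaVanishingOn_subset hΔone hΔmul hF₁ h.le)

/-- With a measure-preserving action of a discrete group `H` on `P` having no
nonempty compact invariant subsets, the map `F ↦ N_F = {η ∈ Γ : η|_F = 0}` is a
bijection from compact subsets of `P` onto nonzero order ideals of `(Γ, Γ₊)`. -/
theorem gamma_order_ideals_bijection
    {P H : Type*} [TopologicalSpace P] [T2Space P] [LocallyCompactSpace P]
    [SecondCountableTopology P] [TotallyDisconnectedSpace P] [NoncompactSpace P]
    [MeasurableSpace P] [BorelSpace P]
    [Group H] [MulAction H P]
    (hHcont : ∀ h : H, Continuous fun x : P => h • x)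
    (μ : Measure P)
    (hμpos : ∀ U : Set P, IsOpen U → U.Nonempty → 0 < μ U)
    (hμfin : ∀ K : Set P, IsCompact K → μ K ≠ ⊤)
    (hμinv : ∀ h : H, ∀ s : Set P, μ ((fun x : P => h • x) '' s) = μ s)
    (hnoinv : ¬ ∃ K : Set P, K.Nonempty ∧ IsCompact K ∧
      ∀ h : H, (fun x : P => h • x) '' K = K)
    (L : ℕ → Set P) (hLmono : Monotone L)
    (hL : ∀ n, IsCompact (L n) ∧ IsOpen (L n) ∧ (L n).Nonempty)
    (hLunion : (⋃ n, L n) = Set.univ)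
    (Δ : AddSubgroup ℝ) (hΔctble : Countable Δ) (hΔone : (1 : ℝ) ∈ Δ)
    (hΔmul : ∀ r ∈ Δ, ∀ K : Set P, IsCompact K → IsOpen K → (μ K).toReal * r ∈ Δ)
    (hΔdiv : ∀ r ∈ Δ, ∀ n : ℕ, ((μ (L n)).toReal)⁻¹ * r ∈ Δ) :
    -- each `N_F` is a nonzero order ideal
    (∀ F : Set P, IsCompact F →
      IsOrderIdealGamma μ Δ {η : P → ℝ | MemGamma μ Δ η ∧ ∀ x ∈ F, η x = 0} ∧
      ∃ η : P → ℝ, η ∈ {η : P → ℝ | MemGamma μ Δ η ∧ ∀ x ∈ F, η x = 0} ∧ η ≠ 0) ∧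
    -- injectivity of `F ↦ N_F`
    (∀ F₁ F₂ : Set P, IsCompact F₁ → IsCompact F₂ →
      {η : P → ℝ | MemGamma μ Δ η ∧ ∀ x ∈ F₁, η x = 0} =
        {η : P → ℝ | MemGamma μ Δ η ∧ ∀ x ∈ F₂, η x = 0} → F₁ = F₂) ∧
    -- surjectivity onto nonzero order ideals
    (∀ N : Set (P → ℝ), IsOrderIdealGamma μ Δ N → (∃ η ∈ N, η ≠ (0 : P → ℝ)) →
      ∃ F : Set P, IsCompact F ∧
        N = {η : P → ℝ | MemGamma μ Δ η ∧ ∀ x ∈ F, η x = 0}) :=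
  gamma_order_ideals_bijection_general μ hμpos hμfin L hLmono hL hLunion Δ hΔone hΔmul hΔdiv
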